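/- arXiv:2509.25979 — 4 statements merged into one kernel-verified Lean document; each statement's English description precedes it below -/
import Mathlib

section
/- Perturbation bound for ReLU networks (Lemma B.4). For any B, n > 0, let f_w : X_B → ℝ^k be an n-layer feedforward ReLU network with weight matrices W_1, …, W_n. Then for any x ∈ X_B and any weight perturbation u = vec({U_i}_{i=1}^n) such that ‖U_i‖₂ ≤ (1/n)·‖W_i‖₂ for every i, the change in the output is bounded by ‖ f_{w+u}(x) − f_w(x) ‖₂ ≤ e·B·( ∏_{i=1}^n ‖W_i‖₂ )·Σ_{i=1}^n ‖U_i‖₂ / ‖W_i‖₂, where f_{w+u} is the network with weight matrices W_i + U_i. -/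
/-!
STATEMENT 5 (Lemma B.4): perturbation bound for ReLU feedforward networks.
-/

noncomputable section

/-- Coordinatewise ReLU on a Euclidean space. -/
noncomputable def relu {k : ℕ} (x : EuclideanSpace ℝ (Fin k)) : EuclideanSpace ℝ (Fin k) :=
  WithLp.toLp 2 (fun i => max (x i) 0)

/-- The `n`-layer ReLU feedforward network with layer widths `dims` and weight matrices
(given as continuous linear maps between Euclidean spaces, whose operator norm is the
spectral norm) `W 0, …, W (n-1)`:
`net dims W n x = W (n-1) (φ (W (n-2) ⋯ φ (W 0 x) ⋯))`. -/
noncomputable def net (dims : ℕ → ℕ)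
    (W : ∀ i : ℕ, EuclideanSpace ℝ (Fin (dims i)) →L[ℝ] EuclideanSpace ℝ (Fin (dims (i + 1)))) :
    (n : ℕ) → EuclideanSpace ℝ (Fin (dims 0)) → EuclideanSpace ℝ (Fin (dims n))
  | 0, x => x
  | 1, x => W 0 x
  | (n + 2), x => W (n + 1) (relu (net dims W (n + 1) x))

lemma relu_lip {k : ℕ} (a b : EuclideanSpace ℝ (Fin k)) : ‖relu a - relu b‖ ≤ ‖a - b‖ := by
  rw [EuclideanSpace.norm_eq, EuclideanSpace.norm_eq]
  apply Real.sqrt_le_sqrt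
  apply Finset.sum_le_sum
  intro i _
  have h1 : (relu a - relu b) i = max (a i) 0 - max (b i) 0 := by simp [relu]
  have h2 : (a - b) i = a i - b i := rfl
  rw [h1, h2]
  have h0 : |max (a i) 0 - max (b i) 0| ≤ |a i - b i| := abs_max_sub_max_le_abs (a i) (b i) 0
  simp only [Real.norm_eq_abs]
  nlinarith [abs_nonneg (max (a i) 0 - max (b i) 0), abs_nonneg (a i - b i),
    sq_abs (max (a i) 0 - max (b i) 0), sq_abs (a i - b i)]

lemma relu_zero {k : ℕ} : relu (0 : EuclideanSpace ℝ (Fin k)) = 0 := by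
  ext i; simp [relu]

lemma relu_norm_le {k : ℕ} (a : EuclideanSpace ℝ (Fin k)) : ‖relu a‖ ≤ ‖a‖ := by
  simpa [relu_zero] using relu_lip a 0

lemma net_norm_le (dims : ℕ → ℕ)
    (W : ∀ i : ℕ, EuclideanSpace ℝ (Fin (dims i)) →L[ℝ] EuclideanSpace ℝ (Fin (dims (i + 1))))
    (x : EuclideanSpace ℝ (Fin (dims 0))) :
    ∀ k : ℕ, ‖net dims W k x‖ ≤ ‖x‖ * ∏ i ∈ Finset.range k, ‖W i‖
  | 0 => by simp [net]
  | 1 => by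
      simp only [net, Finset.prod_range_one]
      calc ‖W 0 x‖ ≤ ‖W 0‖ * ‖x‖ := (W 0).le_opNorm x
        _ = ‖x‖ * ‖W 0‖ := mul_comm _ _
  | (k + 2) => by
      have ih := net_norm_le dims W x (k + 1)
      have h1 : ‖net dims W (k + 2) x‖ ≤ ‖W (k + 1)‖ * ‖relu (net dims W (k + 1) x)‖ := by
        simpa [net] using (W (k + 1)).le_opNorm (relu (net dims W (k + 1) x))
      have h2 : ‖relu (net dims W (k + 1) x)‖ ≤ ‖x‖ * ∏ i ∈ Finset.range (k + 1), ‖W i‖ :=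
        (relu_norm_le _).trans ih
      rw [Finset.prod_range_succ]
      calc ‖net dims W (k + 2) x‖ ≤ ‖W (k + 1)‖ * (‖x‖ * ∏ i ∈ Finset.range (k + 1), ‖W i‖) :=
            h1.trans (mul_le_mul_of_nonneg_left h2 (norm_nonneg _))
        _ = ‖x‖ * ((∏ i ∈ Finset.range (k + 1), ‖W i‖) * ‖W (k + 1)‖) := by ring

lemma net_pert (n : ℕ) (hn : 0 < n) (dims : ℕ → ℕ)
    (W U : ∀ i : ℕ, EuclideanSpace ℝ (Fin (dims i)) →L[ℝ] EuclideanSpace ℝ (Fin (dims (i + 1))))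
    (hU : ∀ i < n, ‖U i‖ ≤ (1 / (n : ℝ)) * ‖W i‖)
    (x : EuclideanSpace ℝ (Fin (dims 0))) :
    ∀ k : ℕ, k + 1 ≤ n →
      ‖net dims (fun i => W i + U i) (k + 1) x - net dims W (k + 1) x‖ ≤
        (1 + 1 / (n : ℝ)) ^ (k + 1) * ‖x‖ * (∏ i ∈ Finset.range (k + 1), ‖W i‖) *
          ∑ i ∈ Finset.range (k + 1), ‖U i‖ / ‖W i‖ := by
  have hC1 : (1 : ℝ) ≤ 1 + 1 / (n : ℝ) := by
    have : (0 : ℝ) ≤ 1 / (n : ℝ) := by positivity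
    linarith
  have hC0 : (0 : ℝ) ≤ 1 + 1 / (n : ℝ) := by positivity
  have hUW : ∀ i < n, ‖U i‖ = ‖U i‖ / ‖W i‖ * ‖W i‖ := by
    intro i hi
    rcases eq_or_ne ‖W i‖ 0 with h | h
    · have : ‖U i‖ ≤ 0 := by simpa [h] using hU i hi
      have hU0 : ‖U i‖ = 0 := le_antisymm this (norm_nonneg _)
      simp [hU0, h]
    · rw [div_mul_cancel₀ _ h]
  intro k
  induction k with
  | zero =>
      intro hkn
      simp only [zero_add, net, Finset.prod_range_one, Finset.sum_range_one, pow_one]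
      have heq : (W 0 + U 0) x - W 0 x = U 0 x := by
        simp [ContinuousLinearMap.add_apply]
      rw [heq]
      have h1 : ‖U 0 x‖ ≤ ‖U 0‖ * ‖x‖ := (U 0).le_opNorm x
      set r0 := ‖U 0‖ / ‖W 0‖ with hr0
      have hr0nn : 0 ≤ r0 := by positivity
      have h2 : ‖U 0‖ = r0 * ‖W 0‖ := hUW 0 hn
      calc ‖U 0 x‖ ≤ ‖U 0‖ * ‖x‖ := h1
        _ = 1 * (‖x‖ * ‖W 0‖ * r0) := by rw [h2]; ring
        _ ≤ (1 + 1 / (n : ℝ)) * (‖x‖ * ‖W 0‖ * r0) := by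
            apply mul_le_mul_of_nonneg_right hC1
            positivity
        _ = (1 + 1 / (n : ℝ)) * ‖x‖ * ‖W 0‖ * r0 := by ring
  | succ k ih =>
      intro hkn
      have hkn' : k + 1 ≤ n := by omega
      have hklt : k + 1 < n := by omega
      have ihb := ih hkn'
      set C := (1 + 1 / (n : ℝ)) with hCdef
      set a' := net dims (fun i => W i + U i) (k + 1) x with ha'
      set a := net dims W (k + 1) x with ha
      have hnet' : net dims (fun i => W i + U i) (k + 2) x =
          (W (k + 1) + U (k + 1)) (relu a') := rfl
      have hnet : net dims W (k + 2) x = W (k + 1) (relu a) := rfl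
      have hsplit : (W (k + 1) + U (k + 1)) (relu a') - W (k + 1) (relu a) =
          (W (k + 1) + U (k + 1)) (relu a' - relu a) + U (k + 1) (relu a) := by
        simp [ContinuousLinearMap.add_apply, map_sub]; abel
      rw [hnet', hnet, hsplit]
      -- bounds
      have hOp : ‖W (k + 1) + U (k + 1)‖ ≤ C * ‖W (k + 1)‖ := by
        calc ‖W (k + 1) + U (k + 1)‖ ≤ ‖W (k + 1)‖ + ‖U (k + 1)‖ := norm_add_le _ _
          _ ≤ ‖W (k + 1)‖ + 1 / (n : ℝ) * ‖W (k + 1)‖ := by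
              linarith [hU (k + 1) hklt]
          _ = C * ‖W (k + 1)‖ := by rw [hCdef]; ring
      have hd : ‖relu a' - relu a‖ ≤ ‖a' - a‖ := relu_lip a' a
      have hA : ‖relu a‖ ≤ ‖x‖ * ∏ i ∈ Finset.range (k + 1), ‖W i‖ :=
        (relu_norm_le a).trans (net_norm_le dims W x (k + 1))
      have t1 : ‖(W (k + 1) + U (k + 1)) (relu a' - relu a)‖ ≤
          C * ‖W (k + 1)‖ * ‖a' - a‖ := by
        calc ‖(W (k + 1) + U (k + 1)) (relu a' - relu a)‖
            ≤ ‖W (k + 1) + U (k + 1)‖ * ‖relu a' - relu a‖ :=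
              ContinuousLinearMap.le_opNorm _ _
          _ ≤ (C * ‖W (k + 1)‖) * ‖a' - a‖ :=
              mul_le_mul hOp hd (norm_nonneg _) (by positivity)
      have t2 : ‖U (k + 1) (relu a)‖ ≤
          ‖U (k + 1)‖ / ‖W (k + 1)‖ * ‖W (k + 1)‖ * (‖x‖ * ∏ i ∈ Finset.range (k + 1), ‖W i‖) := by
        calc ‖U (k + 1) (relu a)‖ ≤ ‖U (k + 1)‖ * ‖relu a‖ := ContinuousLinearMap.le_opNorm _ _
          _ ≤ ‖U (k + 1)‖ * (‖x‖ * ∏ i ∈ Finset.range (k + 1), ‖W i‖) :=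
              mul_le_mul_of_nonneg_left hA (norm_nonneg _)
          _ = _ := by rw [← hUW (k + 1) hklt]
      -- abbreviations for algebra
      set P := ∏ i ∈ Finset.range (k + 1), ‖W i‖ with hP
      set S := ∑ i ∈ Finset.range (k + 1), ‖U i‖ / ‖W i‖ with hS
      set r := ‖U (k + 1)‖ / ‖W (k + 1)‖ with hr
      set w := ‖W (k + 1)‖ with hw
      have hPnn : 0 ≤ P := Finset.prod_nonneg fun i _ => norm_nonneg _
      have hSnn : 0 ≤ S := Finset.sum_nonneg fun i _ => by positivity
      have hrnn : 0 ≤ r := by positivity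
      have hwnn : 0 ≤ w := norm_nonneg _
      have hCpow : (1 : ℝ) ≤ C ^ (k + 2) := by
        calc (1 : ℝ) = 1 ^ (k + 2) := (one_pow _).symm
          _ ≤ C ^ (k + 2) := pow_le_pow_left₀ (by norm_num) hC1 _
      rw [Finset.prod_range_succ, Finset.sum_range_succ]
      have hfin : C * w * ‖a' - a‖ + r * w * (‖x‖ * P) ≤
          C ^ (k + 2) * ‖x‖ * (P * w) * (S + r) := by
        have step1 : C * w * ‖a' - a‖ ≤ C * w * (C ^ (k + 1) * ‖x‖ * P * S) :=
          mul_le_mul_of_nonneg_left ihb (by positivity)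
        have e1 : C * w * (C ^ (k + 1) * ‖x‖ * P * S) = C ^ (k + 2) * ‖x‖ * (P * w) * S := by
          ring
        have step2 : r * w * (‖x‖ * P) ≤ C ^ (k + 2) * ‖x‖ * (P * w) * r := by
          have : r * w * (‖x‖ * P) = 1 * (‖x‖ * (P * w) * r) := by ring
          rw [this]
          calc 1 * (‖x‖ * (P * w) * r) ≤ C ^ (k + 2) * (‖x‖ * (P * w) * r) := by
                apply mul_le_mul_of_nonneg_right hCpow; positivity
            _ = C ^ (k + 2) * ‖x‖ * (P * w) * r := by ring
        calc C * w * ‖a' - a‖ + r * w * (‖x‖ * P)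
            ≤ C ^ (k + 2) * ‖x‖ * (P * w) * S + C ^ (k + 2) * ‖x‖ * (P * w) * r := by
              rw [e1] at step1; exact add_le_add step1 step2
          _ = C ^ (k + 2) * ‖x‖ * (P * w) * (S + r) := by ring
      calc ‖(W (k + 1) + U (k + 1)) (relu a' - relu a) + U (k + 1) (relu a)‖
          ≤ ‖(W (k + 1) + U (k + 1)) (relu a' - relu a)‖ + ‖U (k + 1) (relu a)‖ := norm_add_le _ _
        _ ≤ C * w * ‖a' - a‖ + r * w * (‖x‖ * P) := add_le_add t1 t2
        _ ≤ C ^ (k + 2) * ‖x‖ * (P * w) * (S + r) := hfin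


/-- Lemma B.4.  For an `n`-layer ReLU network `f_w` with weight matrices `W i`
(`0 < n`, spectral norm `‖W i‖`), any `x` with `‖x‖₂ ≤ B`, and any weight perturbations
`U i` with `‖U i‖₂ ≤ (1/n)·‖W i‖₂`, the output change satisfies
`‖f_{w+u}(x) - f_w(x)‖₂ ≤ e·B·(∏ᵢ ‖W i‖₂)·∑ᵢ ‖U i‖₂ / ‖W i‖₂`. -/
theorem relu_net_perturbation_bound
    (B : ℝ) (hB : 0 < B) (n : ℕ) (hn : 0 < n) (dims : ℕ → ℕ)
    (W U : ∀ i : ℕ, EuclideanSpace ℝ (Fin (dims i)) →L[ℝ] EuclideanSpace ℝ (Fin (dims (i + 1))))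
    (hU : ∀ i < n, ‖U i‖ ≤ (1 / (n : ℝ)) * ‖W i‖)
    (x : EuclideanSpace ℝ (Fin (dims 0))) (hx : ‖x‖ ≤ B) :
    ‖net dims (fun i => W i + U i) n x - net dims W n x‖ ≤
      Real.exp 1 * B * (∏ i ∈ Finset.range n, ‖W i‖) *
        ∑ i ∈ Finset.range n, ‖U i‖ / ‖W i‖ := by
  obtain ⟨k, rfl⟩ : ∃ k, n = k + 1 := ⟨n - 1, by omega⟩
  have key := net_pert (k + 1) hn dims W U hU x (k) (le_refl _)
  set C := (1 + 1 / ((k + 1 : ℕ) : ℝ)) with hCdef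
  have hnpos : (0 : ℝ) < ((k + 1 : ℕ) : ℝ) := by positivity
  have hCe : C ^ (k + 1) ≤ Real.exp 1 := by
    have h1 : C ≤ Real.exp (1 / ((k + 1 : ℕ) : ℝ)) := by
      have := Real.add_one_le_exp (1 / ((k + 1 : ℕ) : ℝ))
      rw [hCdef]; linarith
    have hC0 : (0 : ℝ) ≤ C := by rw [hCdef]; positivity
    calc C ^ (k + 1) ≤ Real.exp (1 / ((k + 1 : ℕ) : ℝ)) ^ (k + 1) :=
          pow_le_pow_left₀ hC0 h1 _
      _ = Real.exp (((k + 1 : ℕ) : ℝ) * (1 / ((k + 1 : ℕ) : ℝ))) := by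
          rw [Real.exp_nat_mul]
      _ = Real.exp 1 := by rw [mul_one_div, div_self (ne_of_gt hnpos)]
  have hPnn : 0 ≤ ∏ i ∈ Finset.range (k + 1), ‖W i‖ :=
    Finset.prod_nonneg fun i _ => norm_nonneg _
  have hSnn : 0 ≤ ∑ i ∈ Finset.range (k + 1), ‖U i‖ / ‖W i‖ :=
    Finset.sum_nonneg fun i _ => by positivity
  have hxe : C ^ (k + 1) * ‖x‖ ≤ Real.exp 1 * B :=
    mul_le_mul hCe hx (norm_nonneg _) (Real.exp_pos 1).le
  calc ‖net dims (fun i => W i + U i) (k + 1) x - net dims W (k + 1) x‖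
      ≤ C ^ (k + 1) * ‖x‖ * (∏ i ∈ Finset.range (k + 1), ‖W i‖) *
        ∑ i ∈ Finset.range (k + 1), ‖U i‖ / ‖W i‖ := key
    _ ≤ Real.exp 1 * B * (∏ i ∈ Finset.range (k + 1), ‖W i‖) *
        ∑ i ∈ Finset.range (k + 1), ‖U i‖ / ‖W i‖ := by
        apply mul_le_mul_of_nonneg_right _ hSnn
        exact mul_le_mul_of_nonneg_right hxe hPnn

end
end

section
/- Dual feasibility implies certification (conclusion of Pf A.6). Let ρ and ν be probability measures on a measurable space Ω with ν absolutely continuous with respect to ρ, let φ : Ω → ℝ be measurable with values in {−1, 0, 1}, and let ε ≥ 0 satisfy KL(ν ‖ ρ) ≤ ε. Let pA, pB ∈ [0,1] with pA + pB ≤ 1, ρ(φ = 1) ≥ pA, and ρ(φ = −1) ≤ pB. If there exist λ > 0 and κ ∈ ℝ such that κ − λ·ε − pA·λ·exp((κ−1)/λ − 1) − pB·λ·exp((κ+1)/λ − 1) − (1 − pA − pB)·λ·exp(κ/λ − 1) ≥ 0, then ∫ φ dν ≥ 0, i.e. ν(φ = 1) ≥ ν(φ = −1). -/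
/-!
STATEMENT 14 (conclusion of Pf A.6): dual feasibility implies certification.
-/

open MeasureTheory
open scoped ENNReal NNReal

noncomputable section

lemma young_kl (lam u v : ℝ) (hlam : 0 < lam) (hv : 0 ≤ v) :
    u * v ≤ lam * (v * Real.log v) + lam * Real.exp (u / lam - 1) := by
  rcases eq_or_lt_of_le hv with h0 | h0
  · rw [← h0]
    have := Real.exp_pos (u / lam - 1)
    have := Real.log_zero
    nlinarith
  · have hlog : Real.exp (Real.log v) = v := Real.exp_log h0
    set t := u / lam - 1 - Real.log v with ht
    have h1 : t + 1 ≤ Real.exp t := Real.add_one_le_exp t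
    have h2 : Real.exp (u / lam - 1) = Real.exp t * v := by
      rw [← hlog, ← Real.exp_add, ht]; ring_nf
    have h3 : u * v - lam * (v * Real.log v) = lam * v * (t + 1) := by
      rw [ht]; linear_combination (-v) * (mul_div_cancel₀ u hlam.ne')
    nlinarith [mul_le_mul_of_nonneg_left h1 (le_of_lt (mul_pos hlam h0))]

lemma integral_three {Ω : Type*} [MeasurableSpace Ω] (μ : Measure Ω) [IsFiniteMeasure μ]
    (φ : Ω → ℝ) (hφm : Measurable φ)
    (c1 c2 c3 : ℝ) :
    ∫ ω, (if φ ω = 1 then c1 else if φ ω = -1 then c2 else c3) ∂μ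
      = c1 * (μ {ω | φ ω = 1}).toReal + c2 * (μ {ω | φ ω = -1}).toReal
        + c3 * (μ {ω | ¬ (φ ω = 1 ∨ φ ω = -1)}).toReal := by
  classical
  have hA : MeasurableSet {ω | φ ω = 1} := hφm (measurableSet_singleton 1)
  have hB : MeasurableSet {ω | φ ω = -1} := hφm (measurableSet_singleton (-1))
  have hC : MeasurableSet {ω | ¬ (φ ω = 1 ∨ φ ω = -1)} := ((hA.union hB)).compl
  have heq : (fun ω => (if φ ω = 1 then c1 else if φ ω = -1 then c2 else c3))
      = fun ω => Set.indicator {ω | φ ω = 1} (fun _ => c1) ω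
          + Set.indicator {ω | φ ω = -1} (fun _ => c2) ω
          + Set.indicator {ω | ¬ (φ ω = 1 ∨ φ ω = -1)} (fun _ => c3) ω := by
    funext ω
    by_cases h1 : φ ω = 1
    · simp [Set.indicator, h1]; norm_num
    · by_cases h2 : φ ω = -1
      · simp [Set.indicator, h1, h2]; norm_num
      · simp [Set.indicator, h1, h2]
  have hI1 : Integrable (fun ω => Set.indicator {ω | φ ω = 1} (fun _ => c1) ω) μ :=
    (integrable_const c1).indicator hA
  have hI2 : Integrable (fun ω => Set.indicator {ω | φ ω = -1} (fun _ => c2) ω) μ :=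
    (integrable_const c2).indicator hB
  have hI3 : Integrable
      (fun ω => Set.indicator {ω | ¬ (φ ω = 1 ∨ φ ω = -1)} (fun _ => c3) ω) μ :=
    (integrable_const c3).indicator hC
  have hI12 : Integrable (fun ω => Set.indicator {ω | φ ω = 1} (fun _ => c1) ω
      + Set.indicator {ω | φ ω = -1} (fun _ => c2) ω) μ := hI1.add hI2
  rw [heq, integral_add hI12 hI3, integral_add hI1 hI2,
    integral_indicator_const _ hA, integral_indicator_const _ hB, integral_indicator_const _ hC]
  simp [mul_comm, measureReal_def]

open Classical in
/-- Kullback–Leibler divergence between two measures, valued in `ℝ≥0∞`. -/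
noncomputable def klDiv {Ω : Type*} [MeasurableSpace Ω] (μ ν : Measure Ω) : ℝ≥0∞ :=
  if μ ≪ ν ∧ Integrable (llr μ ν) μ then ENNReal.ofReal (∫ ω, llr μ ν ω ∂μ) else ⊤

/-- Dual feasibility implies certification.  Let `ν ≪ ρ` be probability measures with
`KL(ν‖ρ) ≤ ε`, let `φ : Ω → {-1, 0, 1}` be measurable, and let `pA, pB ∈ [0,1]` with
`pA + pB ≤ 1`, `ρ(φ = 1) ≥ pA` and `ρ(φ = -1) ≤ pB`.  If there exist `λ > 0` and `κ ∈ ℝ`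
with `κ - λ ε - pA·λ·exp((κ-1)/λ - 1) - pB·λ·exp((κ+1)/λ - 1)
- (1 - pA - pB)·λ·exp(κ/λ - 1) ≥ 0`, then `∫ φ dν ≥ 0`, i.e. `ν(φ = 1) ≥ ν(φ = -1)`. -/
theorem dual_feasibility_implies_certification
    {Ω : Type*} [MeasurableSpace Ω]
    (ρ ν : Measure Ω) [IsProbabilityMeasure ρ] [IsProbabilityMeasure ν]
    (hac : ν ≪ ρ)
    (φ : Ω → ℝ) (hφm : Measurable φ)
    (hφ : ∀ ω, φ ω = -1 ∨ φ ω = 0 ∨ φ ω = 1)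
    (ε : ℝ) (hε : 0 ≤ ε) (hKL : klDiv ν ρ ≤ ENNReal.ofReal ε)
    (pA pB : ℝ) (hpA0 : 0 ≤ pA) (hpA1 : pA ≤ 1) (hpB0 : 0 ≤ pB) (hpB1 : pB ≤ 1)
    (hsum : pA + pB ≤ 1)
    (hA : pA ≤ (ρ {ω | φ ω = 1}).toReal)
    (hB : (ρ {ω | φ ω = -1}).toReal ≤ pB)
    (lam κ : ℝ) (hlam : 0 < lam)
    (hfeas : 0 ≤ κ - lam * ε - pA * (lam * Real.exp ((κ - 1) / lam - 1))
        - pB * (lam * Real.exp ((κ + 1) / lam - 1))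
        - (1 - pA - pB) * (lam * Real.exp (κ / lam - 1))) :
    (0 ≤ ∫ ω, φ ω ∂ν) ∧ ν {ω | φ ω = -1} ≤ ν {ω | φ ω = 1} := by
  classical
  -- extract KL information
  have hcond : ν ≪ ρ ∧ Integrable (llr ν ρ) ν := by
    by_contra hc
    simp only [klDiv, if_neg hc, top_le_iff] at hKL
    exact (ENNReal.ofReal_ne_top) hKL
  have hllr : Integrable (llr ν ρ) ν := hcond.2
  have hKLle : ∫ ω, llr ν ρ ω ∂ν ≤ ε := by
    simp only [klDiv, if_pos hcond] at hKL
    rcases le_or_gt (∫ ω, llr ν ρ ω ∂ν) 0 with h | h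
    · linarith
    · exact (ENNReal.ofReal_le_ofReal_iff hε).mp hKL
  set r : Ω → ℝ := fun ω => (ν.rnDeriv ρ ω).toReal with hr
  have hrm : Measurable r := (Measure.measurable_rnDeriv ν ρ).ennreal_toReal
  have hr0 : ∀ ω, 0 ≤ r ω := fun ω => ENNReal.toReal_nonneg
  set E1 : ℝ := Real.exp ((κ - 1) / lam - 1) with hE1
  set E2 : ℝ := Real.exp ((κ + 1) / lam - 1) with hE2
  set E3 : ℝ := Real.exp (κ / lam - 1) with hE3
  have hE1pos : 0 < E1 := Real.exp_pos _
  have hE2pos : 0 < E2 := Real.exp_pos _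
  have hE3pos : 0 < E3 := Real.exp_pos _
  have hE13 : E1 ≤ E3 := Real.exp_le_exp.mpr (by
    have : (κ - 1) / lam ≤ κ / lam := (div_le_div_iff_of_pos_right hlam).mpr (by linarith)
    linarith)
  have hE32 : E3 ≤ E2 := Real.exp_le_exp.mpr (by
    have : κ / lam ≤ (κ + 1) / lam := (div_le_div_iff_of_pos_right hlam).mpr (by linarith)
    linarith)
  -- abbreviations for measures
  set a : ℝ := (ρ {ω | φ ω = 1}).toReal with ha
  set b : ℝ := (ρ {ω | φ ω = -1}).toReal with hb
  set c : ℝ := (ρ {ω | ¬ (φ ω = 1 ∨ φ ω = -1)}).toReal with hc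
  have ha0 : 0 ≤ a := ENNReal.toReal_nonneg
  have hb0 : 0 ≤ b := ENNReal.toReal_nonneg
  have hc0 : 0 ≤ c := ENNReal.toReal_nonneg
  have habc : a + b + c = 1 := by
    have h1 := integral_three ρ φ hφm 1 1 1
    have h2 : (fun ω => if φ ω = 1 then (1:ℝ) else if φ ω = -1 then 1 else 1)
        = fun _ => (1:ℝ) := by funext ω; simp [ite_self]
    rw [h2, integral_const] at h1
    simp only [measureReal_def, measure_univ, ENNReal.toReal_one, smul_eq_mul, one_mul, mul_one] at h1
    linarith [h1]
  -- the exponential integral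
  have hexp_eq : (fun ω => Real.exp ((κ - φ ω) / lam - 1))
      = fun ω => (if φ ω = 1 then E1 else if φ ω = -1 then E2 else E3) := by
    funext ω
    rcases hφ ω with h | h | h <;> simp [h, hE1, hE2, hE3] <;> norm_num
  have hIexp : Integrable (fun ω => Real.exp ((κ - φ ω) / lam - 1)) ρ := by
    rw [hexp_eq]
    refine Integrable.mono' (integrable_const (max E1 (max E2 E3))) ?_ ?_
    · refine (Measurable.aestronglyMeasurable ?_)
      exact Measurable.ite (hφm (measurableSet_singleton 1)) measurable_const
        (Measurable.ite (hφm (measurableSet_singleton (-1))) measurable_const measurable_const)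
    · filter_upwards with ω
      rcases hφ ω with h | h | h <;> simp [h] <;>
        [skip; skip; skip] <;> norm_num <;>
        simp [abs_of_pos, hE1pos, hE2pos, hE3pos, le_max_iff, le_refl]
  have hexp_int : ∫ ω, Real.exp ((κ - φ ω) / lam - 1) ∂ρ = E1 * a + E2 * b + E3 * c := by
    rw [hexp_eq, integral_three ρ φ hφm E1 E2 E3]
  -- integrabilities
  have hIr : Integrable r ρ := Measure.integrable_toReal_rnDeriv
  have hIL : Integrable (fun ω => (κ - φ ω) * r ω) ρ := by
    refine hIr.bdd_mul (c := |κ| + 1) (measurable_const.sub hφm).aestronglyMeasurable (Filter.Eventually.of_forall fun ω => ?_)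
    rcases hφ ω with h | h | h <;> rw [Real.norm_eq_abs, h] <;>
      [exact (abs_sub _ _).trans (by simp);
       exact (abs_sub _ _).trans (by simp);
       exact (abs_sub _ _).trans (by simp)]
  have hIrlog : Integrable (fun ω => r ω * Real.log (r ω)) ρ := by
    have := (integrable_rnDeriv_smul_iff (f := llr ν ρ) hac).mpr hllr
    simpa [llr, smul_eq_mul, hr] using this
  -- Young, integrated
  have hYoung : ∀ ω, (κ - φ ω) * r ω
      ≤ lam * (r ω * Real.log (r ω)) + lam * Real.exp ((κ - φ ω) / lam - 1) :=
    fun ω => young_kl lam (κ - φ ω) (r ω) hlam (hr0 ω)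
  have hImono : ∫ ω, (κ - φ ω) * r ω ∂ρ
      ≤ ∫ ω, (lam * (r ω * Real.log (r ω)) + lam * Real.exp ((κ - φ ω) / lam - 1)) ∂ρ :=
    integral_mono hIL ((hIrlog.const_mul lam).add (hIexp.const_mul lam)) hYoung
  -- identify LHS
  have hIφν : Integrable φ ν := by
    refine Integrable.mono' (integrable_const 1) hφm.aestronglyMeasurable ?_
    filter_upwards with ω
    rcases hφ ω with h | h | h <;> simp [h]
  have hLHS : ∫ ω, (κ - φ ω) * r ω ∂ρ = κ - ∫ ω, φ ω ∂ν := by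
    have h1 : ∫ ω, (κ - φ ω) * r ω ∂ρ = ∫ ω, (κ - φ ω) ∂ν := by
      rw [← integral_rnDeriv_smul (f := fun ω => κ - φ ω) hac]
      congr 1
      funext ω
      simp [hr, smul_eq_mul, mul_comm]
    rw [h1, integral_sub (integrable_const κ) hIφν, integral_const]
    simp
  -- identify RHS
  have hRHS : ∫ ω, (lam * (r ω * Real.log (r ω)) + lam * Real.exp ((κ - φ ω) / lam - 1)) ∂ρ
      = lam * (∫ ω, llr ν ρ ω ∂ν) + lam * (E1 * a + E2 * b + E3 * c) := by
    have hll : ∫ ω, r ω * Real.log (r ω) ∂ρ = ∫ ω, llr ν ρ ω ∂ν := by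
      rw [← integral_rnDeriv_smul (f := llr ν ρ) hac]
      congr 1
    rw [integral_add (hIrlog.const_mul lam) (hIexp.const_mul lam),
      integral_const_mul, integral_const_mul, hexp_int, hll]
  -- the comparison of the three-term bound
  have hthree : E1 * a + E2 * b + E3 * c ≤ pA * E1 + pB * E2 + (1 - pA - pB) * E3 := by
    nlinarith [mul_nonneg (sub_nonneg.mpr hA) (sub_nonneg.mpr hE13),
      mul_nonneg (sub_nonneg.mpr hB) (sub_nonneg.mpr hE32)]
  have hlamKL : lam * (∫ ω, llr ν ρ ω ∂ν) ≤ lam * ε :=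
    mul_le_mul_of_nonneg_left hKLle hlam.le
  have hlamthree : lam * (E1 * a + E2 * b + E3 * c)
      ≤ pA * (lam * E1) + pB * (lam * E2) + (1 - pA - pB) * (lam * E3) := by
    have := mul_le_mul_of_nonneg_left hthree hlam.le
    nlinarith [this]
  have hmain : 0 ≤ ∫ ω, φ ω ∂ν := by
    rw [hLHS, hRHS] at hImono
    linarith
  refine ⟨hmain, ?_⟩
  -- second conclusion
  have hφν : ∫ ω, φ ω ∂ν = (ν {ω | φ ω = 1}).toReal - (ν {ω | φ ω = -1}).toReal := by
    have h0 : (fun ω => φ ω)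
        = fun ω => (if φ ω = 1 then (1:ℝ) else if φ ω = -1 then -1 else 0) := by
      funext ω
      rcases hφ ω with h | h | h <;> simp [h] <;> norm_num
    rw [h0, integral_three ν φ hφm 1 (-1) 0]
    ring
  have htoReal : (ν {ω | φ ω = -1}).toReal ≤ (ν {ω | φ ω = 1}).toReal := by
    rw [hφν] at hmain; linarith
  exact (ENNReal.toReal_le_toReal (measure_ne_top ν _) (measure_ne_top ν _)).mp htoReal

end
end

section
/- Value of the KL certification dual (combined Pf A.7). Let 0 < pB < pA with pA + pB ≤ 1, and let ε ∈ ℝ. Then sup over ξ ∈ ℝ and ζ > 0 of the quantity ξ − ε − pA·exp(ξ − ζ − 1) − pB·exp(ξ + ζ − 1) − (1 − pA − pB)·exp(ξ − 1) equals −ln( 1 − (sqrt(pA) − sqrt(pB))² ) − ε. In particular, this supremum is nonnegative if and only if ε ≤ −ln( 1 − (sqrt(pA) − sqrt(pB))² ). -/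
/-!
STATEMENT 17 (combined Pf A.7): value of the Lagrangian dual of the KL randomized
smoothing certification problem.
-/

/-- For `0 < pB < pA` with `pA + pB ≤ 1` and any `ε ∈ ℝ`, the supremum over `ξ ∈ ℝ` and
`ζ > 0` of `ξ - ε - pA·exp(ξ - ζ - 1) - pB·exp(ξ + ζ - 1) - (1 - pA - pB)·exp(ξ - 1)`
equals `-ln(1 - (√pA - √pB)²) - ε`; in particular it is nonnegative iff
`ε ≤ -ln(1 - (√pA - √pB)²)`. -/
theorem kl_certification_dual_value (pA pB : ℝ) (hB0 : 0 < pB) (hBA : pB < pA)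
    (hsum : pA + pB ≤ 1) (ε : ℝ) :
    (sSup {r : ℝ | ∃ ξ ζ : ℝ, 0 < ζ ∧
        r = ξ - ε - pA * Real.exp (ξ - ζ - 1) - pB * Real.exp (ξ + ζ - 1)
            - (1 - pA - pB) * Real.exp (ξ - 1)}
      = -Real.log (1 - (Real.sqrt pA - Real.sqrt pB) ^ 2) - ε) ∧
    ((0 ≤ sSup {r : ℝ | ∃ ξ ζ : ℝ, 0 < ζ ∧
        r = ξ - ε - pA * Real.exp (ξ - ζ - 1) - pB * Real.exp (ξ + ζ - 1)
            - (1 - pA - pB) * Real.exp (ξ - 1)})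
      ↔ ε ≤ -Real.log (1 - (Real.sqrt pA - Real.sqrt pB) ^ 2)) := by
  have hA0 : 0 < pA := hB0.trans hBA
  set a := Real.sqrt pA with hadef
  set b := Real.sqrt pB with hbdef
  have ha : a ^ 2 = pA := Real.sq_sqrt hA0.le
  have hb : b ^ 2 = pB := Real.sq_sqrt hB0.le
  have ha0 : 0 < a := Real.sqrt_pos.2 hA0
  have hb0 : 0 < b := Real.sqrt_pos.2 hB0
  have hba : b < a := by
    rw [hadef, hbdef]
    exact Real.sqrt_lt_sqrt hB0.le hBA
  set c := 1 - (a - b) ^ 2 with hc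
  have hc0 : 0 < c := by nlinarith [mul_pos ha0 hb0]
  set S := {r : ℝ | ∃ ξ ζ : ℝ, 0 < ζ ∧
        r = ξ - ε - pA * Real.exp (ξ - ζ - 1) - pB * Real.exp (ξ + ζ - 1)
            - (1 - pA - pB) * Real.exp (ξ - 1)} with hS
  -- upper bound
  have hub : ∀ r ∈ S, r ≤ -Real.log c - ε := by
    rintro r ⟨ξ, ζ, hζ, rfl⟩
    have hE0 : 0 < Real.exp (ξ - 1) := Real.exp_pos _
    have e1 : Real.exp (ξ - ζ - 1) = Real.exp (ξ - 1) * Real.exp (-ζ) := by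
      rw [← Real.exp_add]; ring_nf
    have e2 : Real.exp (ξ + ζ - 1) = Real.exp (ξ - 1) * Real.exp ζ := by
      rw [← Real.exp_add]; ring_nf
    -- AM-GM: pA * exp(-ζ) + pB * exp ζ ≥ 2ab
    have hexp1 : Real.exp (-ζ) = Real.exp (-(ζ/2)) ^ 2 := by
      rw [sq, ← Real.exp_add]; ring_nf
    have hexp2 : Real.exp ζ = Real.exp (ζ/2) ^ 2 := by
      rw [sq, ← Real.exp_add]; ring_nf
    have hexp3 : Real.exp (-(ζ/2)) * Real.exp (ζ/2) = 1 := by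
      rw [← Real.exp_add]; norm_num
    have hamgm : 2 * (a * b) ≤ pA * Real.exp (-ζ) + pB * Real.exp ζ := by
      nlinarith [sq_nonneg (a * Real.exp (-(ζ/2)) - b * Real.exp (ζ/2))]
    -- log bound: ξ - c * exp(ξ-1) ≤ -log c
    have hlog : ξ - c * Real.exp (ξ - 1) ≤ -Real.log c := by
      have h := Real.add_one_le_exp (ξ - 1 + Real.log c)
      rw [Real.exp_add, Real.exp_log hc0] at h
      linarith
    have hcomb : 2 * (a * b) * Real.exp (ξ - 1) ≤
        pA * Real.exp (ξ - ζ - 1) + pB * Real.exp (ξ + ζ - 1) := by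
      rw [e1, e2]
      nlinarith [hamgm, hE0]
    have hcval : c = 2 * (a * b) + 1 - pA - pB := by
      rw [hc, ← ha, ← hb]; ring
    nlinarith [hcomb, hlog, hE0]
  -- the optimal point
  have hmem : (-Real.log c - ε) ∈ S := by
    refine ⟨1 - Real.log c, Real.log a - Real.log b, ?_, ?_⟩
    · have := Real.log_lt_log hb0 hba
      linarith
    · have e1 : Real.exp ((1 - Real.log c) - (Real.log a - Real.log b) - 1)
          = b / (c * a) := by
        rw [show (1 - Real.log c) - (Real.log a - Real.log b) - 1
            = Real.log b - (Real.log c + Real.log a) by ring,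
          Real.exp_sub, Real.exp_add, Real.exp_log hb0, Real.exp_log hc0,
          Real.exp_log ha0]
      have e2 : Real.exp ((1 - Real.log c) + (Real.log a - Real.log b) - 1)
          = a / (c * b) := by
        rw [show (1 - Real.log c) + (Real.log a - Real.log b) - 1
            = Real.log a - (Real.log c + Real.log b) by ring,
          Real.exp_sub, Real.exp_add, Real.exp_log ha0, Real.exp_log hc0,
          Real.exp_log hb0]
      have e0 : Real.exp ((1 - Real.log c) - 1) = 1 / c := by
        rw [show (1 - Real.log c) - 1 = -Real.log c by ring, Real.exp_neg,
          Real.exp_log hc0, one_div]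
      have hcval : c = 2 * (a * b) + 1 - a ^ 2 - b ^ 2 := by rw [hc]; ring
      have k1 : a ^ 2 * (b / (c * a)) = a * b / c := by field_simp
      have k2 : b ^ 2 * (a / (c * b)) = a * b / c := by field_simp
      have ksum : a * b / c + a * b / c + (1 - a ^ 2 - b ^ 2) / c = 1 := by
        rw [← add_div, ← add_div,
          show a * b + a * b + (1 - a ^ 2 - b ^ 2) = c from by rw [hcval]; ring]
        exact div_self hc0.ne'
      rw [e1, e2, e0, ← ha, ← hb, k1, k2, mul_one_div]
      linarith [ksum]
  have hne : S.Nonempty := ⟨_, hmem⟩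
  have hbdd : BddAbove S := ⟨_, hub⟩
  have h1 : sSup S = -Real.log c - ε :=
    le_antisymm (csSup_le hne hub) (le_csSup hbdd hmem)
  refine ⟨h1, ?_⟩
  rw [h1]
  constructor <;> intro h <;> linarith
end

section
/- Abstract KL randomized-smoothing certificate (equation opt1500, used in Theorem 3.3 and Proposition 5.2). Let ρ and ν be probability measures on a measurable space Ω with ν absolutely continuous with respect to ρ, and let φ : Ω → ℝ be measurable with values in {−1, 0, 1}. Let pA, pB ∈ [0,1] satisfy pB ≤ pA, pA + pB ≤ 1, (sqrt(pA) − sqrt(pB))² < 1, ρ(φ = 1) ≥ pA, and ρ(φ = −1) ≤ pB. If KL(ν ‖ ρ) ≤ −ln( 1 − (sqrt(pA) − sqrt(pB))² ), then ∫ φ dν ≥ 0; equivalently, ν(φ = 1) ≥ ν(φ = −1). -/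
/-!
STATEMENT 18 (eq. opt1500): abstract KL randomized-smoothing certificate.
-/

open MeasureTheory
open scoped ENNReal NNReal

lemma tangent_aux (q r : ℝ) (hq : 0 ≤ q) (hr : 0 < r) : q - r ≤ q * Real.log (q / r) := by
  rcases eq_or_lt_of_le hq with h | hq
  · simp [← h]; linarith
  · have h1 : Real.log (r / q) ≤ r / q - 1 := Real.log_le_sub_one_of_pos (by positivity)
    have h2 : Real.log (q / r) = - Real.log (r / q) := by
      rw [Real.log_div hq.ne' hr.ne', Real.log_div hr.ne' hq.ne']; ring
    rw [h2]
    have := mul_le_mul_of_nonneg_left h1 hq.le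
    have hrq : q * (r / q) = r := by field_simp
    nlinarith

lemma exp_quad (s : ℝ) (h0 : 0 ≤ s) (h1 : s ≤ 1/2) :
    Real.exp s + Real.exp (-s) - 2 ≤ 3 * s ^ 2 := by
  have e1 : 1 - s ≤ Real.exp (-s) := by have := Real.add_one_le_exp (-s); linarith
  have e2 : 1 + s ≤ Real.exp s := by have := Real.add_one_le_exp s; linarith
  have hpos : (0:ℝ) < Real.exp s := Real.exp_pos s
  have hpos' : (0:ℝ) < Real.exp (-s) := Real.exp_pos (-s)
  have hmul : Real.exp s * Real.exp (-s) = 1 := by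
    rw [← Real.exp_add]; simp
  have hu : Real.exp s ≤ 1 / (1 - s) := by
    rw [le_div_iff₀ (by linarith : (0:ℝ) < 1 - s)]
    nlinarith
  have hv : Real.exp (-s) ≤ 1 / (1 + s) := by
    rw [le_div_iff₀ (by linarith : (0:ℝ) < 1 + s)]
    nlinarith
  have h1s : (0:ℝ) < 1 - s := by linarith
  have h2s : (0:ℝ) < 1 + s := by linarith
  have : 1 / (1 - s) + 1 / (1 + s) - 2 ≤ 3 * s ^ 2 := by
    rw [div_add_div _ _ h1s.ne' h2s.ne', div_sub' (by nlinarith : ((1 - s) * (1 + s)) ≠ 0),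
      div_le_iff₀ (by nlinarith : (0:ℝ) < (1 - s) * (1 + s))]
    nlinarith [mul_nonneg (sq_nonneg s) (show (0:ℝ) ≤ 1 - 3 * s ^ 2 by nlinarith)]
  linarith

lemma gibbs_term (T : ℝ) (hT : 0 < T) (q r : ℝ) (hq : 0 ≤ q) (hr : 0 ≤ r)
    (h0 : r = 0 → q = 0) :
    q - r / T - q * Real.log T ≤ q * Real.log (q / r) := by
  rcases eq_or_lt_of_le hr with h | hr
  · have := h0 h.symm
    simp [← h, this]
  rcases eq_or_lt_of_le hq with h | hq
  · simp [← h]; positivity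
  · have h1 : q - r / T ≤ q * Real.log (q / (r / T)) :=
      tangent_aux q (r / T) hq.le (by positivity)
    have h2 : Real.log (q / (r / T)) = Real.log (q / r) + Real.log T := by
      rw [div_div_eq_mul_div, Real.log_div (by positivity : q * T ≠ 0) hr.ne',
        Real.log_mul hq.ne' hT.ne', Real.log_div hq.ne' hr.ne']
      ring
    rw [h2] at h1; nlinarith

lemma gibbs3 (q1 q2 q3 r1 r2 r3 : ℝ) (hq1 : 0 ≤ q1) (hq2 : 0 ≤ q2) (hq3 : 0 ≤ q3)
    (hs : q1 + q2 + q3 = 1) (hr1 : 0 < r1) (hr2 : 0 < r2) (hr3 : 0 ≤ r3)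
    (h0 : r3 = 0 → q3 = 0) :
    -Real.log (r1 + r2 + r3) ≤
      q1 * Real.log (q1 / r1) + q2 * Real.log (q2 / r2) + q3 * Real.log (q3 / r3) := by
  set T := r1 + r2 + r3 with hTdef
  have hT : 0 < T := by positivity
  have g1 := gibbs_term T hT q1 r1 hq1 hr1.le (fun h => absurd h hr1.ne')
  have g2 := gibbs_term T hT q2 r2 hq2 hr2.le (fun h => absurd h hr2.ne')
  have g3 := gibbs_term T hT q3 r3 hq3 hr3 h0
  have hTT : r1 / T + r2 / T + r3 / T = 1 := by field_simp; exact hTdef.symm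
  have hlin : q1 * Real.log T + q2 * Real.log T + q3 * Real.log T = Real.log T := by
    rw [← add_mul, ← add_mul, hs, one_mul]
  linarith

lemma log_shift (q p r : ℝ) (hq : 0 ≤ q) (hp : 0 < p) (hr : 0 < r) :
    q * Real.log (q / r) = q * Real.log (q / p) + q * (Real.log p - Real.log r) := by
  rcases eq_or_lt_of_le hq with h | hq
  · simp [← h]
  · rw [Real.log_div hq.ne' hr.ne', Real.log_div hq.ne' hp.ne']; ring

set_option maxHeartbeats 2000000 in
lemma core_cert (a b c qA qB qC pA pB : ℝ)
    (ha : 0 ≤ a) (hb : 0 ≤ b) (hc : 0 ≤ c)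
    (hqA : 0 ≤ qA) (hqB : 0 ≤ qB) (hqC : 0 ≤ qC)
    (hp1 : a + b + c = 1) (hq1 : qA + qB + qC = 1)
    (hb0 : b = 0 → qB = 0) (hc0 : c = 0 → qC = 0)
    (hpB0 : 0 ≤ pB) (hBA : pB ≤ pA)
    (hlt : (Real.sqrt pA - Real.sqrt pB) ^ 2 < 1)
    (hA : pA ≤ a) (hB : b ≤ pB)
    (hKL : qA * Real.log (qA / a) + qB * Real.log (qB / b) + qC * Real.log (qC / c)
      ≤ -Real.log (1 - (Real.sqrt pA - Real.sqrt pB) ^ 2)) :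
    qB ≤ qA := by
  by_contra hcon
  push_neg at hcon
  have hbpos : 0 < b := by
    rcases eq_or_lt_of_le hb with h | h
    · exact absurd (hb0 h.symm) (by linarith : ¬ qB = 0)
    · exact h
  have hapos : 0 < a := lt_of_lt_of_le (lt_of_lt_of_le hbpos hB) (le_trans hBA hA)
  have hpApos : 0 < pA := lt_of_lt_of_le (lt_of_lt_of_le hbpos hB) hBA
  set δ : ℝ := qB - qA with hδdef
  have hδ : 0 < δ := by simp [hδdef]; linarith
  set g : ℝ := Real.sqrt (a * b) with hgdef
  have hg : 0 < g := Real.sqrt_pos.mpr (by positivity)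
  set R : ℝ := c + 2 * g with hRdef
  have hR : 0 < R := by positivity
  -- R = 1 - (√a - √b)^2
  have hsab : Real.sqrt a * Real.sqrt b = g := (Real.sqrt_mul ha b).symm
  have hRval : R = 1 - (Real.sqrt a - Real.sqrt b) ^ 2 := by
    have h1 : Real.sqrt a ^ 2 = a := Real.sq_sqrt ha
    have h2 : Real.sqrt b ^ 2 = b := Real.sq_sqrt hb
    rw [hRdef]; nlinarith
  -- √a - √b ≥ √pA - √pB ≥ 0
  have hsa : Real.sqrt pA ≤ Real.sqrt a := Real.sqrt_le_sqrt hA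
  have hsb : Real.sqrt b ≤ Real.sqrt pB := Real.sqrt_le_sqrt hB
  have hsBA : Real.sqrt pB ≤ Real.sqrt pA := Real.sqrt_le_sqrt hBA
  have hsq : (Real.sqrt pA - Real.sqrt pB) ^ 2 ≤ (Real.sqrt a - Real.sqrt b) ^ 2 := by
    have h1 : 0 ≤ Real.sqrt pA - Real.sqrt pB := by linarith
    nlinarith
  have hRle : R ≤ 1 - (Real.sqrt pA - Real.sqrt pB) ^ 2 := by rw [hRval]; linarith
  have hεle : -Real.log (1 - (Real.sqrt pA - Real.sqrt pB) ^ 2) ≤ -Real.log R := by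
    have := Real.log_le_log hR hRle
    linarith
  -- choose s
  set s : ℝ := min (1/2) (δ * R / (6 * g)) with hsdef
  have hspos : 0 < s := by
    apply lt_min (by norm_num)
    positivity
  have hs12 : s ≤ 1/2 := min_le_left _ _
  have hsle : s ≤ δ * R / (6 * g) := min_le_right _ _
  -- r values
  set r1 : ℝ := g * Real.exp (-s) with hr1def
  set r2 : ℝ := g * Real.exp s with hr2def
  have hr1 : 0 < r1 := by positivity
  have hr2 : 0 < r2 := by positivity
  have hgibbs := gibbs3 qA qB qC r1 r2 c hqA hqB hqC hq1 hr1 hr2 hc hc0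
  -- log identities
  have hlogg : Real.log g = (Real.log a + Real.log b) / 2 := by
    rw [hgdef, Real.log_sqrt (by positivity), Real.log_mul hapos.ne' hbpos.ne']
  set L : ℝ := (Real.log a - Real.log b) / 2 with hLdef
  have hL : 0 ≤ L := by
    have : Real.log b ≤ Real.log a := Real.log_le_log hbpos (le_trans hB (le_trans hBA hA))
    rw [hLdef]; linarith
  have hlogr1 : Real.log a - Real.log r1 = L + s := by
    rw [hr1def, Real.log_mul hg.ne' (Real.exp_ne_zero _), Real.log_exp, hlogg, hLdef]; ring
  have hlogr2 : Real.log b - Real.log r2 = -L - s := by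
    rw [hr2def, Real.log_mul hg.ne' (Real.exp_ne_zero _), Real.log_exp, hlogg, hLdef]; ring
  have hshiftA := log_shift qA a r1 hqA hapos hr1
  have hshiftB := log_shift qB b r2 hqB hbpos hr2
  -- combine
  have hkey : δ * (L + s) ≤ Real.log (r1 + r2 + c) - Real.log R := by
    have : -Real.log (r1 + r2 + c) ≤
        (qA * Real.log (qA / a) + qB * Real.log (qB / b) + qC * Real.log (qC / c))
          + qA * (L + s) + qB * (-L - s) := by
      calc -Real.log (r1 + r2 + c) ≤
          qA * Real.log (qA / r1) + qB * Real.log (qB / r2) + qC * Real.log (qC / c) := hgibbs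
        _ = _ := by rw [hshiftA, hshiftB, ← hlogr1, ← hlogr2]; ring
    have heq : qA * (L + s) + qB * (-L - s) = -(δ * (L + s)) := by
      rw [hδdef]; ring
    have h3 := le_trans hKL hεle
    linarith
  have hT : 0 < r1 + r2 + c := by positivity
  have hTR : r1 + r2 + c - R = g * (Real.exp s + Real.exp (-s) - 2) := by
    rw [hr1def, hr2def, hRdef]; ring
  have hlogTR : Real.log (r1 + r2 + c) - Real.log R ≤ (r1 + r2 + c - R) / R := by
    have h1 : Real.log ((r1 + r2 + c) / R) ≤ (r1 + r2 + c) / R - 1 :=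
      Real.log_le_sub_one_of_pos (by positivity)
    rw [Real.log_div hT.ne' hR.ne'] at h1
    have : (r1 + r2 + c) / R - 1 = (r1 + r2 + c - R) / R := by field_simp
    linarith [this ▸ h1]
  have hquad : r1 + r2 + c - R ≤ g * (3 * s ^ 2) := by
    rw [hTR]
    exact mul_le_mul_of_nonneg_left (exp_quad s hspos.le hs12) hg.le
  -- final contradiction
  have hfin : δ * s ≤ 3 * g * s ^ 2 / R := by
    have h1 : δ * s ≤ δ * (L + s) :=
      mul_le_mul_of_nonneg_left (by linarith : s ≤ L + s) hδ.le
    have h2 : (r1 + r2 + c - R) / R ≤ g * (3 * s ^ 2) / R :=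
      (div_le_div_iff_of_pos_right hR).mpr hquad
    calc δ * s ≤ Real.log (r1 + r2 + c) - Real.log R := le_trans h1 hkey
      _ ≤ (r1 + r2 + c - R) / R := hlogTR
      _ ≤ g * (3 * s ^ 2) / R := h2
      _ = 3 * g * s ^ 2 / R := by ring_nf
  have hδle : δ ≤ 3 * g * s / R := by
    have := (div_le_div_iff_of_pos_right hspos).mpr hfin
    calc δ = δ * s / s := by field_simp
      _ ≤ 3 * g * s ^ 2 / R / s := this
      _ = 3 * g * s / R := by field_simp
  have h1 : s * (6 * g) ≤ δ * R := (le_div_iff₀ (by positivity)).mp hsle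
  have h2 : δ * R ≤ 3 * g * s := (le_div_iff₀ hR).mp hδle
  have h4 : s * (6 * g) ≤ 3 * g * s := le_trans h1 h2
  have h5 : s * (6 * g) = 2 * (3 * g * s) := by ring
  have h6 : 0 < 3 * g * s := by positivity
  linarith only [h4, h5, h6]

lemma set_llr_bound {Ω : Type*} [MeasurableSpace Ω] (ρ ν : Measure Ω)
    [IsFiniteMeasure ρ] [IsFiniteMeasure ν] (hac : ν ≪ ρ)
    (hint : Integrable (llr ν ρ) ν) {S : Set Ω} (hS : MeasurableSet S) :
    (ν S).toReal * Real.log ((ν S).toReal / (ρ S).toReal) ≤ ∫ ω in S, llr ν ρ ω ∂ν := by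
  by_cases hν0 : ν S = 0
  · have h0 : ∫ ω in S, llr ν ρ ω ∂ν = 0 := by
      rw [Measure.restrict_eq_zero.mpr hν0, integral_zero_measure]
    rw [h0, hν0]; simp
  · have hρ0 : ρ S ≠ 0 := fun h => hν0 (hac h)
    set q : ℝ := (ν S).toReal with hqdef
    set p : ℝ := (ρ S).toReal with hpdef
    have hq : 0 < q := ENNReal.toReal_pos hν0 (measure_ne_top _ _)
    have hp : 0 < p := ENNReal.toReal_pos hρ0 (measure_ne_top _ _)
    set m : ℝ := q / p with hmdef
    have hm : 0 < m := by positivity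
    have hint2 : Integrable (fun ω => (ν.rnDeriv ρ ω).toReal • llr ν ρ ω) ρ :=
      (integrable_rnDeriv_smul_iff hac).mpr hint
    have heq : ∫ ω in S, llr ν ρ ω ∂ν
        = ∫ ω in S, (ν.rnDeriv ρ ω).toReal • llr ν ρ ω ∂ρ :=
      (setIntegral_rnDeriv_smul hac hS).symm
    have hfint : Integrable (fun ω => (ν.rnDeriv ρ ω).toReal) ρ :=
      Measure.integrable_toReal_rnDeriv
    have hfS : ∫ ω in S, (ν.rnDeriv ρ ω).toReal ∂ρ = q :=
      Measure.setIntegral_toReal_rnDeriv hac S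
    have hpoint : ∀ ω, (Real.log m + 1) * (ν.rnDeriv ρ ω).toReal - m
        ≤ (ν.rnDeriv ρ ω).toReal • llr ν ρ ω := by
      intro ω
      set y : ℝ := (ν.rnDeriv ρ ω).toReal with hydef
      have hy : 0 ≤ y := ENNReal.toReal_nonneg
      have hllr : llr ν ρ ω = Real.log y := rfl
      rw [hllr, smul_eq_mul]
      rcases eq_or_lt_of_le hy with h | hy'
      · rw [← h]; simp; linarith
      · have h1 := tangent_aux y m hy hm
        rw [Real.log_div hy'.ne' hm.ne'] at h1
        nlinarith [h1]
    have hg0int : Integrable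
        (fun ω => (Real.log m + 1) * (ν.rnDeriv ρ ω).toReal - m) (ρ.restrict S) :=
      (hfint.restrict.const_mul _).sub (integrable_const m)
    have hmono : ∫ ω in S, ((Real.log m + 1) * (ν.rnDeriv ρ ω).toReal - m) ∂ρ
        ≤ ∫ ω in S, (ν.rnDeriv ρ ω).toReal • llr ν ρ ω ∂ρ :=
      integral_mono hg0int hint2.restrict (fun ω => hpoint ω)
    have hcomp : ∫ ω in S, ((Real.log m + 1) * (ν.rnDeriv ρ ω).toReal - m) ∂ρ
        = q * Real.log m := by
      rw [integral_sub (hfint.restrict.const_mul _) (integrable_const m),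
        integral_const_mul, hfS, setIntegral_const, smul_eq_mul]
      have hpm : p * m = q := by rw [hmdef]; field_simp
      rw [measureReal_def, ← hpdef]
      linarith [hpm]
    rw [heq]
    exact le_of_le_of_eq (le_of_eq (hcomp.symm)) rfl |>.trans hmono

noncomputable section

/-- Abstract KL randomized-smoothing certificate.  Let `ν ≪ ρ` be probability measures,
`φ : Ω → {-1, 0, 1}` measurable, and `pA, pB ∈ [0,1]` with `pB ≤ pA`, `pA + pB ≤ 1`,
`(√pA - √pB)² < 1`, `ρ(φ = 1) ≥ pA` and `ρ(φ = -1) ≤ pB`.  If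
`KL(ν‖ρ) ≤ -ln(1 - (√pA - √pB)²)`, then `∫ φ dν ≥ 0`, equivalently
`ν(φ = 1) ≥ ν(φ = -1)`. -/
theorem kl_randomized_smoothing_certificate
    {Ω : Type*} [MeasurableSpace Ω]
    (ρ ν : Measure Ω) [IsProbabilityMeasure ρ] [IsProbabilityMeasure ν]
    (hac : ν ≪ ρ)
    (φ : Ω → ℝ) (hφm : Measurable φ)
    (hφ : ∀ ω, φ ω = -1 ∨ φ ω = 0 ∨ φ ω = 1)
    (pA pB : ℝ) (hpA0 : 0 ≤ pA) (hpA1 : pA ≤ 1) (hpB0 : 0 ≤ pB) (hpB1 : pB ≤ 1)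
    (hBA : pB ≤ pA) (hsum : pA + pB ≤ 1)
    (hlt : (Real.sqrt pA - Real.sqrt pB) ^ 2 < 1)
    (hA : pA ≤ (ρ {ω | φ ω = 1}).toReal)
    (hB : (ρ {ω | φ ω = -1}).toReal ≤ pB)
    (hKL : klDiv ν ρ ≤
      ENNReal.ofReal (-Real.log (1 - (Real.sqrt pA - Real.sqrt pB) ^ 2))) :
    (0 ≤ ∫ ω, φ ω ∂ν) ∧ ν {ω | φ ω = -1} ≤ ν {ω | φ ω = 1} := by
  set A : Set Ω := {ω | φ ω = 1} with hAdef
  set B : Set Ω := {ω | φ ω = -1} with hBdef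
  have hAm : MeasurableSet A := hφm (measurableSet_singleton 1)
  have hBm : MeasurableSet B := hφm (measurableSet_singleton (-1))
  set C : Set Ω := (A ∪ B)ᶜ with hCdef
  have hUm : MeasurableSet (A ∪ B) := hAm.union hBm
  have hCm : MeasurableSet C := hUm.compl
  have hdisj : Disjoint A B := by
    rw [Set.disjoint_left]
    intro ω h1 h2
    have e1 : φ ω = 1 := h1
    have e2 : φ ω = -1 := h2
    norm_num [e1] at e2
  -- epsilon nonneg
  set ε : ℝ := -Real.log (1 - (Real.sqrt pA - Real.sqrt pB) ^ 2) with hεdef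
  have hεnn : 0 ≤ ε := by
    have h1 : (0:ℝ) ≤ 1 - (Real.sqrt pA - Real.sqrt pB) ^ 2 := by linarith
    have h2 : 1 - (Real.sqrt pA - Real.sqrt pB) ^ 2 ≤ 1 := by
      nlinarith [sq_nonneg (Real.sqrt pA - Real.sqrt pB)]
    have := Real.log_nonpos h1 h2
    rw [hεdef]; linarith
  -- extract integrability and the real KL bound
  rw [klDiv] at hKL
  split_ifs at hKL with hcond
  swap
  · exact absurd (top_le_iff.mp hKL) ENNReal.ofReal_ne_top
  have hint : Integrable (llr ν ρ) ν := hcond.2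
  have hIle : ∫ ω, llr ν ρ ω ∂ν ≤ ε := by
    rcases le_or_gt (∫ ω, llr ν ρ ω ∂ν) 0 with h | h
    · linarith
    · exact (ENNReal.ofReal_le_ofReal_iff hεnn).mp hKL
  -- split the integral
  have hsplit : ∫ ω in A, llr ν ρ ω ∂ν + ∫ ω in B, llr ν ρ ω ∂ν
      + ∫ ω in C, llr ν ρ ω ∂ν = ∫ ω, llr ν ρ ω ∂ν := by
    have h1 : ∫ ω in A ∪ B, llr ν ρ ω ∂ν + ∫ ω in C, llr ν ρ ω ∂ν
        = ∫ ω, llr ν ρ ω ∂ν := integral_add_compl hUm hint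
    have h2 : ∫ ω in A ∪ B, llr ν ρ ω ∂ν
        = ∫ ω in A, llr ν ρ ω ∂ν + ∫ ω in B, llr ν ρ ω ∂ν :=
      setIntegral_union hdisj hBm hint.integrableOn hint.integrableOn
    linarith
  -- per-set bounds
  have bA := set_llr_bound ρ ν hac hint hAm
  have bB := set_llr_bound ρ ν hac hint hBm
  have bC := set_llr_bound ρ ν hac hint hCm
  set a : ℝ := (ρ A).toReal
  set b : ℝ := (ρ B).toReal
  set c : ℝ := (ρ C).toReal
  set qA : ℝ := (ν A).toReal
  set qB : ℝ := (ν B).toReal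
  set qC : ℝ := (ν C).toReal
  have hKL3 : qA * Real.log (qA / a) + qB * Real.log (qB / b)
      + qC * Real.log (qC / c) ≤ ε := by linarith
  -- sums
  have hsumρ : a + b + c = 1 := by
    have h1 : ρ (A ∪ B) + ρ C = 1 := by
      rw [measure_add_measure_compl hUm, measure_univ]
    have h2 : ρ (A ∪ B) = ρ A + ρ B := measure_union hdisj hBm
    have h3 : (ρ A + ρ B + ρ C).toReal = (1:ℝ≥0∞).toReal := by
      rw [← h2, h1]
    rw [ENNReal.toReal_add (by finiteness) (by finiteness),
      ENNReal.toReal_add (by finiteness) (by finiteness)] at h3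
    simpa using h3
  have hsumν : qA + qB + qC = 1 := by
    have h1 : ν (A ∪ B) + ν C = 1 := by
      rw [measure_add_measure_compl hUm, measure_univ]
    have h2 : ν (A ∪ B) = ν A + ν B := measure_union hdisj hBm
    have h3 : (ν A + ν B + ν C).toReal = (1:ℝ≥0∞).toReal := by
      rw [← h2, h1]
    rw [ENNReal.toReal_add (by finiteness) (by finiteness),
      ENNReal.toReal_add (by finiteness) (by finiteness)] at h3
    simpa using h3
  -- degenerate implications
  have hzero : ∀ S : Set Ω, (ρ S).toReal = 0 → (ν S).toReal = 0 := by
    intro S h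
    have : ρ S = 0 := by
      rcases (ENNReal.toReal_eq_zero_iff _).mp h with h' | h'
      · exact h'
      · exact absurd h' (measure_ne_top _ _)
    rw [hac this]; simp
  -- core
  have hmain : qB ≤ qA := by
    refine core_cert a b c qA qB qC pA pB ENNReal.toReal_nonneg ENNReal.toReal_nonneg
      ENNReal.toReal_nonneg ENNReal.toReal_nonneg ENNReal.toReal_nonneg
      ENNReal.toReal_nonneg hsumρ hsumν (hzero B) (hzero C) hpB0 hBA hlt hA hB hKL3
  constructor
  · -- integral representation
    have hrep : ∀ ω, φ ω = A.indicator (fun _ => (1:ℝ)) ω - B.indicator (fun _ => (1:ℝ)) ω := by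
      intro ω
      rcases hφ ω with h | h | h
      · have hωA : ω ∉ A := by simp [hAdef, h]; norm_num
        have hωB : ω ∈ B := h
        simp [Set.indicator_apply, hωA, hωB, h]
      · have hωA : ω ∉ A := by simp [hAdef, h]
        have hωB : ω ∉ B := by simp [hBdef, h]
        simp [Set.indicator_apply, hωA, hωB, h]
      · have hωA : ω ∈ A := h
        have hωB : ω ∉ B := by simp [hBdef, h]; norm_num
        simp [Set.indicator_apply, hωA, hωB, h]
    have hintA : Integrable (A.indicator fun _ => (1:ℝ)) ν :=
      (integrable_const (1:ℝ)).indicator hAm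
    have hintB : Integrable (B.indicator fun _ => (1:ℝ)) ν :=
      (integrable_const (1:ℝ)).indicator hBm
    have : ∫ ω, φ ω ∂ν = qA - qB := by
      calc ∫ ω, φ ω ∂ν
          = ∫ ω, (A.indicator (fun _ => (1:ℝ)) ω - B.indicator (fun _ => (1:ℝ)) ω) ∂ν := by
            exact integral_congr_ae (Filter.Eventually.of_forall hrep)
        _ = ∫ ω, A.indicator (fun _ => (1:ℝ)) ω ∂ν - ∫ ω, B.indicator (fun _ => (1:ℝ)) ω ∂ν :=
            integral_sub hintA hintB
        _ = qA - qB := by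
            rw [integral_indicator_const _ hAm, integral_indicator_const _ hBm]
            simp
            rfl
    rw [this]; linarith
  · exact (ENNReal.toReal_le_toReal (measure_ne_top _ _) (measure_ne_top _ _)).mp hmain

end
end
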